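/- Let p > 1, α > 0, γ > 0, r₀ ∈ ℝ, β : [0,T] → ℝ⁺ continuous, and let (r_t) follow the Hull-White model dr_t = α(β(t) - r_t)dt + γ dW_t. Then there is a constant c_p, independent of the step size h = T/n, such that E[exp(-2p ∑_{i=0}^{n-1} r_{ih} h)] ≤ c_p for all n ∈ ℕ⁺; i.e., the exponential moments of the Riemann sums of the rate are uniformly bounded in the step size. -/

import Mathlib

/-!
Write `R_i = r_{ih}`. Conditioning on the past at time `(k-1)h`, the Hull-White transition
`R_k = e^{-αh} R_{k-1} + m_k + G_k`, with a drift `m_k ≥ 0` (as `β ≥ 0`) that can only lower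
the expectation and an independent centred Gaussian `G_k` of variance at most `γ² h`, turns
`E[exp(-θ(∑_{i<k} R_i + a R_k))]` into at most `exp(γ² h (θa)² / 2)` times the same expression
one step earlier, with last weight `1 + e^{-αh} a ≤ 1 + a`. After `n` steps the weights never
exceed `n`, so with `θ = 2ph` and `nh = T` the product of the Gaussian factors is at most
`exp(2p²γ²T³)`, uniformly in `n`.
-/

open MeasureTheory Real ProbabilityTheory
open scoped NNReal

theorem integral_exp_mul_add_of_indep_gaussian {Ω : Type*} {ℱ : MeasurableSpace Ω}
    [MeasurableSpace Ω] {P : Measure Ω} {G Y : Ω → ℝ} {v : ℝ≥0}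
    (hG : P.map G = gaussianReal 0 v)
    (hindep : Indep (MeasurableSpace.comap G inferInstance) ℱ P)
    (hYℱ : Measurable[ℱ] Y) (hY : Measurable Y) (l : ℝ) :
    ∫ ω, exp (l * G ω + Y ω) ∂P = exp (v * l ^ 2 / 2) * ∫ ω, exp (Y ω) ∂P := by
  have hG_meas : AEMeasurable G P := aemeasurable_of_map_neZero (by rw [hG]; infer_instance)
  have hfac : IndepFun (fun ω => exp (l * G ω)) (fun ω => exp (Y ω)) P :=
    indep_of_indep_of_le_right
      (indep_of_indep_of_le_left hindep
        ((by fun_prop : Measurable fun x : ℝ => exp (l * x)).comp (comap_measurable G)).comap_le)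
      hYℱ.exp.comap_le
  simp_rw [exp_add]
  rw [hfac.integral_fun_mul_eq_mul_integral (by fun_prop) (by fun_prop)]
  congr 1
  simpa [mgf] using mgf_gaussianReal hG l

section WeightedPartialSum

variable {Ω : Type*} (R : ℕ → Ω → ℝ)

/-- The weight `a` of the last term plays the role of the paper's accumulated coefficient
`h_k / h`. -/
def weightedPartialSum (k : ℕ) (a : ℝ) (ω : Ω) : ℝ :=
  ∑ i ∈ Finset.range k, R i ω + a * R k ω

variable {R}

theorem weightedPartialSum_zero (a : ℝ) (ω : Ω) : weightedPartialSum R 0 a ω = a * R 0 ω := by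
  simp [weightedPartialSum]

theorem weightedPartialSum_succ {k : ℕ} {c m : ℝ} {G : Ω → ℝ} {ω : Ω}
    (hstep : R (k + 1) ω = c * R k ω + m + G ω) (a : ℝ) :
    weightedPartialSum R (k + 1) a ω = weightedPartialSum R k (1 + a * c) ω + a * m + a * G ω := by
  rw [weightedPartialSum, weightedPartialSum, Finset.sum_range_succ, hstep]
  ring

theorem measurable_weightedPartialSum {ℱ : MeasurableSpace Ω} {k : ℕ}
    (hR : ∀ j ≤ k, Measurable[ℱ] (R j)) (a : ℝ) :
    Measurable[ℱ] (weightedPartialSum R k a) :=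
  (Finset.measurable_sum _ fun i hi => hR i (Finset.mem_range.1 hi).le).add
    ((hR k le_rfl).const_mul a)

end WeightedPartialSum

theorem integral_exp_neg_mul_weightedPartialSum_le {Ω : Type*} [MeasurableSpace Ω]
    {P : Measure Ω} [IsProbabilityMeasure P] {R G : ℕ → Ω → ℝ} {ℱ : ℕ → MeasurableSpace Ω}
    {c m : ℕ → ℝ} {v : ℕ → ℝ≥0} {n : ℕ} {R₀ ν θ N : ℝ}
    (hR : ∀ i, Measurable (R i)) (hR₀ : ∀ ω, R 0 ω = R₀)
    (hℱ : ∀ i j, j ≤ i → Measurable[ℱ i] (R j))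
    (hstep : ∀ i < n, ∀ ω, R (i + 1) ω = c i * R i ω + m i + G i ω)
    (hc : ∀ i < n, 0 ≤ c i ∧ c i ≤ 1) (hm : ∀ i < n, 0 ≤ m i)
    (hG : ∀ i < n, P.map (G i) = gaussianReal 0 (v i)) (hv : ∀ i < n, (v i : ℝ) ≤ ν)
    (hindep : ∀ i < n, Indep (MeasurableSpace.comap (G i) inferInstance) (ℱ i) P)
    (hθ : 0 ≤ θ) {k : ℕ} (hk : k ≤ n) {a : ℝ} (ha : 0 ≤ a) (haN : a + k ≤ N) :
    ∫ ω, exp (-θ * weightedPartialSum R k a ω) ∂P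
      ≤ exp (θ * N * |R₀| + k * ν * (θ * N) ^ 2 / 2) := by
  induction k generalizing a with
  | zero =>
    have haN : a ≤ N := by simpa using haN
    simp only [weightedPartialSum_zero, hR₀, integral_const, probReal_univ, one_smul,
      CharP.cast_eq_zero, zero_mul, zero_div, add_zero]
    refine exp_le_exp.2 ?_
    calc -θ * (a * R₀) = θ * a * -R₀ := by ring
      _ ≤ θ * a * |R₀| := by gcongr; exact neg_le_abs R₀
      _ ≤ θ * N * |R₀| := by gcongr
  | succ k ih =>
    have hkn : k < n := hk
    obtain ⟨hc₀, hc₁⟩ := hc k hkn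
    have haN' : a ≤ N := by push_cast at haN; linarith
    set a' := 1 + a * c k
    set S := fun ω => -θ * weightedPartialSum R k a' ω
    have hsplit : ∀ ω, -θ * weightedPartialSum R (k + 1) a ω
        = -θ * a * G k ω + (S ω + -θ * a * m k) := by
      intro ω
      rw [weightedPartialSum_succ (hstep k hkn ω)]
      ring
    have hY (ℱ' : MeasurableSpace Ω) (hR' : ∀ j ≤ k, Measurable[ℱ'] (R j)) :
        Measurable[ℱ'] fun ω => S ω + -θ * a * m k :=
      ((measurable_weightedPartialSum hR' a').const_mul (-θ)).add_const _
    have hdrift : exp (-θ * a * m k) ≤ 1 :=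
      exp_le_one_iff.2 (by nlinarith [mul_nonneg hθ ha, hm k hkn])
    have hvar : exp ((v k : ℝ) * (-θ * a) ^ 2 / 2) ≤ exp (ν * (θ * N) ^ 2 / 2) := by
      have hν : 0 ≤ ν := (v k).2.trans (hv k hkn)
      rw [neg_mul, neg_sq]
      gcongr
      exact hv k hkn
    have hIH : ∫ ω, exp (S ω) ∂P ≤ exp (θ * N * |R₀| + k * ν * (θ * N) ^ 2 / 2) :=
      ih hkn.le (by positivity) (by push_cast at haN ⊢; nlinarith)
    calc ∫ ω, exp (-θ * weightedPartialSum R (k + 1) a ω) ∂P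
        = exp ((v k : ℝ) * (-θ * a) ^ 2 / 2) * ((∫ ω, exp (S ω) ∂P) * exp (-θ * a * m k)) := by
          simp_rw [hsplit]
          rw [integral_exp_mul_add_of_indep_gaussian (hG k hkn) (hindep k hkn)
            (hY _ (hℱ k)) (hY _ fun j _ => hR j)]
          simp_rw [exp_add]
          rw [integral_mul_const]
      _ ≤ exp (ν * (θ * N) ^ 2 / 2) * (exp (θ * N * |R₀| + k * ν * (θ * N) ^ 2 / 2) * 1) := by
          gcongr
      _ = exp (θ * N * |R₀| + (k + 1 : ℕ) * ν * (θ * N) ^ 2 / 2) := by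
          rw [mul_one, ← exp_add]; congr 1; push_cast; ring

theorem ornsteinUhlenbeck_variance_le {α : ℝ} (hα : 0 < α) (γ h : ℝ) :
    γ ^ 2 / (2 * α) * (1 - exp (-2 * α * h)) ≤ γ ^ 2 * h := by
  have := add_one_le_exp (-2 * α * h)
  rw [div_mul_eq_mul_div, div_le_iff₀ (by positivity)]
  nlinarith [sq_nonneg γ]

theorem hullWhite_integral_exp_neg_mul_sum_le {Ω : Type*} [MeasurableSpace Ω] {P : Measure Ω}
    [IsProbabilityMeasure P] {T α γ r₀ : ℝ} {β : ℝ → ℝ} {r : ℝ → Ω → ℝ} (hα : 0 < α)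
    (hβpos : ∀ s ∈ Set.Icc (0:ℝ) T, 0 ≤ β s)
    (hrmeas : ∀ t, Measurable (r t)) (hr0 : ∀ ω, r 0 ω = r₀)
    (hGauss : ∀ u t : ℝ, 0 ≤ u → u < t → t ≤ T →
      Measure.map (fun ω => r t ω - exp (-α * (t - u)) * r u ω
          - α * ∫ s in u..t, exp (-α * (t - s)) * β s) P =
        gaussianReal 0 ((γ ^ 2 / (2 * α) * (1 - exp (-2 * α * (t - u)))).toNNReal))
    (hIndep : ∀ u t : ℝ, 0 ≤ u → u < t → t ≤ T →
      Indep
        (MeasurableSpace.comap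
          (fun ω => r t ω - exp (-α * (t - u)) * r u ω
            - α * ∫ s in u..t, exp (-α * (t - s)) * β s) inferInstance)
        (⨆ s ∈ Set.Icc (0:ℝ) u, MeasurableSpace.comap (r s) inferInstance) P)
    {h : ℝ} (hh : 0 < h) {n : ℕ} (hnh : n * h ≤ T) {θ : ℝ} (hθ : 0 ≤ θ) :
    ∫ ω, exp (-θ * ∑ i ∈ Finset.range n, r (i * h) ω) ∂P
      ≤ exp (θ * n * |r₀| + n * (γ ^ 2 * h) * (θ * n) ^ 2 / 2) := by
  have hgrid : ∀ i < n, 0 ≤ (i : ℝ) * h ∧ (i : ℝ) * h < ((i + 1 : ℕ) : ℝ) * h ∧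
      ((i + 1 : ℕ) : ℝ) * h ≤ T := by
    refine fun i hi => ⟨by positivity, by gcongr; simp, le_trans ?_ hnh⟩
    gcongr
    exact_mod_cast hi
  have hdt (i : ℕ) : ((i + 1 : ℕ) : ℝ) * h - i * h = h := by push_cast; ring
  have key := integral_exp_neg_mul_weightedPartialSum_le (P := P) (R := fun i => r (i * h))
    (ℱ := fun i => ⨆ s ∈ Set.Icc (0:ℝ) (i * h), MeasurableSpace.comap (r s) inferInstance)
    (c := fun i => exp (-α * (((i + 1 : ℕ) : ℝ) * h - i * h)))
    (m := fun i => α * ∫ s in (i : ℝ) * h..((i + 1 : ℕ) : ℝ) * h,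
      exp (-α * (((i + 1 : ℕ) : ℝ) * h - s)) * β s)
    (G := fun i ω => r (((i + 1 : ℕ) : ℝ) * h) ω
      - exp (-α * (((i + 1 : ℕ) : ℝ) * h - i * h)) * r (i * h) ω
      - α * ∫ s in (i : ℝ) * h..((i + 1 : ℕ) : ℝ) * h,
          exp (-α * (((i + 1 : ℕ) : ℝ) * h - s)) * β s)
    (ν := γ ^ 2 * h) (N := n) (k := n) (a := 0)
    (fun i => hrmeas _) (by simpa using hr0)
    (fun i j hji => Measurable.of_comap_le (le_biSup (fun s => MeasurableSpace.comap (r s) _)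
      ⟨by positivity, by gcongr⟩))
    (fun i _ ω => by ring)
    (fun i _ => ⟨(exp_pos _).le, exp_le_one_iff.2 (by rw [hdt]; nlinarith)⟩)
    (fun i hi => mul_nonneg hα.le (intervalIntegral.integral_nonneg (hgrid i hi).2.1.le
      fun s hs => mul_nonneg (exp_pos _).le
        (hβpos s ⟨(hgrid i hi).1.trans hs.1, hs.2.trans (hgrid i hi).2.2⟩)))
    (fun i hi => hGauss _ _ (hgrid i hi).1 (hgrid i hi).2.1 (hgrid i hi).2.2)
    (fun i _ => by
      rw [Real.coe_toNNReal', hdt]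
      exact max_le (ornsteinUhlenbeck_variance_le hα γ h) (by positivity))
    (fun i hi => hIndep _ _ (hgrid i hi).1 (hgrid i hi).2.1 (hgrid i hi).2.2)
    hθ le_rfl le_rfl (by simp)
  simpa [weightedPartialSum] using key

theorem stmt_10_general {Ω : Type*} [MeasurableSpace Ω] (P : Measure Ω) [IsProbabilityMeasure P]
    (T : ℝ) (hT : 0 < T) (p : ℝ) (hp : 1 < p)
    (α γ : ℝ) (hα : 0 < α) (r₀ : ℝ)
    (β : ℝ → ℝ) (hβpos : ∀ s ∈ Set.Icc (0:ℝ) T, 0 ≤ β s)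
    (r : ℝ → Ω → ℝ) (hrmeas : ∀ t, Measurable (r t))
    (hr0 : ∀ ω, r 0 ω = r₀)
    (hGauss : ∀ u t : ℝ, 0 ≤ u → u < t → t ≤ T →
      Measure.map (fun ω => r t ω - Real.exp (-α * (t - u)) * r u ω
          - α * ∫ s in u..t, Real.exp (-α * (t - s)) * β s) P =
        gaussianReal 0 ((γ^2 / (2 * α) * (1 - Real.exp (-2 * α * (t - u)))).toNNReal))
    (hIndep : ∀ u t : ℝ, 0 ≤ u → u < t → t ≤ T →
      Indep
        (MeasurableSpace.comap
          (fun ω => r t ω - Real.exp (-α * (t - u)) * r u ω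
            - α * ∫ s in u..t, Real.exp (-α * (t - s)) * β s) inferInstance)
        (⨆ s ∈ Set.Icc (0:ℝ) u, MeasurableSpace.comap (r s) inferInstance) P) :
    ∃ c : ℝ, ∀ n : ℕ, 0 < n →
      (∫ ω, Real.exp (-2 * p * ∑ i ∈ Finset.range n, r (i * (T / n)) ω * (T / n)) ∂P) ≤ c := by
  refine ⟨exp (2 * p * T * |r₀| + 2 * p ^ 2 * γ ^ 2 * T ^ 3), fun n hn => ?_⟩
  set h := T / n
  have hnh : (n : ℝ) * h = T := by simp only [h]; field_simp
  calc ∫ ω, exp (-2 * p * ∑ i ∈ Finset.range n, r (i * h) ω * h) ∂P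
      = ∫ ω, exp (-(2 * p * h) * ∑ i ∈ Finset.range n, r (i * h) ω) ∂P := by
        simp_rw [← Finset.sum_mul, neg_mul, mul_assoc, mul_comm _ h]
    _ ≤ exp (2 * p * h * n * |r₀| + n * (γ ^ 2 * h) * (2 * p * h * n) ^ 2 / 2) :=
        hullWhite_integral_exp_neg_mul_sum_le hα hβpos hrmeas hr0 hGauss hIndep
          (by positivity) hnh.le (by positivity)
    _ = _ := by rw [← hnh]; ring_nf

/-- for the Hull-White model, the exponential moments of the
Riemann sums of the rate are uniformly bounded in the step size.  The
Hull-White dynamics `dr_t = α(β(t) - r_t)dt + γ dW_t` are encoded through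
the Gaussian Markov structure of the solution: for `u ≤ t` the innovation
`r_t - e^{-α(t-u)} r_u - α∫_u^t e^{-α(t-s)}β(s)ds` is a centered Gaussian
with variance `(γ²/(2α))(1 - e^{-2α(t-u)})`, independent of the past. -/
theorem stmt_10 {Ω : Type*} [MeasurableSpace Ω] (P : Measure Ω) [IsProbabilityMeasure P]
    (T : ℝ) (hT : 0 < T) (p : ℝ) (hp : 1 < p)
    (α γ : ℝ) (hα : 0 < α) (hγ : 0 < γ) (r₀ : ℝ)
    (β : ℝ → ℝ) (hβ : ContinuousOn β (Set.Icc 0 T)) (hβpos : ∀ s ∈ Set.Icc (0:ℝ) T, 0 ≤ β s)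
    (r : ℝ → Ω → ℝ) (hrmeas : ∀ t, Measurable (r t))
    (hr0 : ∀ ω, r 0 ω = r₀)
    (hGauss : ∀ u t : ℝ, 0 ≤ u → u < t → t ≤ T →
      Measure.map (fun ω => r t ω - Real.exp (-α * (t - u)) * r u ω
          - α * ∫ s in u..t, Real.exp (-α * (t - s)) * β s) P =
        gaussianReal 0 ((γ^2 / (2 * α) * (1 - Real.exp (-2 * α * (t - u)))).toNNReal))
    (hIndep : ∀ u t : ℝ, 0 ≤ u → u < t → t ≤ T →
      Indep
        (MeasurableSpace.comap
          (fun ω => r t ω - Real.exp (-α * (t - u)) * r u ω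
            - α * ∫ s in u..t, Real.exp (-α * (t - s)) * β s) inferInstance)
        (⨆ s ∈ Set.Icc (0:ℝ) u, MeasurableSpace.comap (r s) inferInstance) P) :
    ∃ c : ℝ, ∀ n : ℕ, 0 < n →
      (∫ ω, Real.exp (-2 * p * ∑ i ∈ Finset.range n, r (i * (T / n)) ω * (T / n)) ∂P) ≤ c :=
  stmt_10_general P T hT p hp α γ hα r₀ β hβpos r hrmeas hr0 hGauss hIndep
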